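/- arXiv:2002.00060 — 9 statements merged into one kernel-verified Lean document; each statement's English description precedes it below -/
import Mathlib

section
/- Let $\lambda$ be a positive integer. For each integer $m \geq \lambda$, let $Y_m$ be a Binomial random variable with parameters $m$ and $\lambda/m$. Then $\mathbb{E}[\max(Y_m, \lambda)] = \sum_{k=0}^{m} \max(k, \lambda) \binom{m}{k} \left(\frac{\lambda}{m}\right)^k \left(1 - \frac{\lambda}{m}\right)^{m-k}$ converges, as $m \to \infty$, to $\lambda + \frac{e^{-\lambda} \lambda^{\lambda+1}}{\lambda!}$. -/
open Filter Finset Real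

lemma poisson_term_limit (lam k : ℕ) :
    Tendsto (fun m : ℕ => (m.choose k : ℝ) * ((lam : ℝ) / m) ^ k * (1 - (lam : ℝ) / m) ^ (m - k))
      atTop (nhds (Real.exp (-(lam : ℝ)) * (lam : ℝ) ^ k / k.factorial)) := by
  have hdiv : Tendsto (fun m : ℕ => (lam : ℝ) / m) atTop (nhds 0) :=
    tendsto_const_div_atTop_nhds_zero_nat _
  have h1 : Tendsto (fun m : ℕ => ∏ i ∈ range k, (1 - (i : ℝ) / m)) atTop (nhds 1) := by
    have := tendsto_finset_prod (f := fun (i : ℕ) (m : ℕ) => 1 - (i : ℝ) / m) (range k)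
      (fun i _ => by simpa using (tendsto_const_div_atTop_nhds_zero_nat (i : ℝ)).const_sub 1)
    simpa using this
  have h2 : Tendsto (fun m : ℕ => (1 - (lam : ℝ) / m) ^ m) atTop
      (nhds (Real.exp (-(lam : ℝ)))) := by
    have := Real.tendsto_one_add_div_pow_exp (-(lam : ℝ))
    simpa [sub_eq_add_neg, neg_div] using this
  have h3 : Tendsto (fun m : ℕ => (1 - (lam : ℝ) / m) ^ k) atTop (nhds 1) := by
    have := (hdiv.const_sub 1).pow k
    simpa using this
  have key : Tendsto (fun m : ℕ => ((lam : ℝ) ^ k / k.factorial) *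
        (∏ i ∈ range k, (1 - (i : ℝ) / m)) * ((1 - (lam : ℝ) / m) ^ m / (1 - (lam : ℝ) / m) ^ k))
      atTop (nhds (Real.exp (-(lam : ℝ)) * (lam : ℝ) ^ k / k.factorial)) := by
    have he : (lam : ℝ) ^ k / k.factorial * 1 * (Real.exp (-(lam : ℝ)) / 1)
        = Real.exp (-(lam : ℝ)) * (lam : ℝ) ^ k / k.factorial := by ring
    rw [← he]
    exact (tendsto_const_nhds.mul h1).mul (h2.div h3 one_ne_zero)
  refine key.congr' ?_
  filter_upwards [eventually_ge_atTop (max k (lam + 1))] with m hm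
  have hk : k ≤ m := le_trans (le_max_left _ _) hm
  have hlm : lam < m := lt_of_lt_of_le (Nat.lt_succ_self _) (le_trans (le_max_right _ _) hm)
  have hm0 : (0 : ℝ) < m := by
    have : 0 < m := lt_of_le_of_lt (Nat.zero_le lam) hlm
    exact_mod_cast this
  have hne : (1 : ℝ) - (lam : ℝ) / m ≠ 0 := by
    have : (lam : ℝ) / m < 1 := (div_lt_one hm0).2 (by exact_mod_cast hlm)
    linarith
  have hdesc : (m.descFactorial k : ℝ) = ∏ i ∈ range k, ((m : ℝ) - i) := by
    rw [Nat.descFactorial_eq_prod_range, Nat.cast_prod]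
    refine Finset.prod_congr rfl fun i hi => ?_
    exact Nat.cast_sub (le_of_lt (lt_of_lt_of_le (mem_range.1 hi) hk))
  have hprod : ∏ i ∈ range k, (1 - (i : ℝ) / m) = (m.descFactorial k : ℝ) / m ^ k := by
    rw [hdesc,
      show (∏ i ∈ range k, (1 - (i : ℝ) / m)) = ∏ i ∈ range k, (((m : ℝ) - i) / (m : ℝ)) from
        Finset.prod_congr rfl fun i _ => by field_simp,
      Finset.prod_div_distrib, Finset.prod_const, Finset.card_range]
  have hchoose : (m.choose k : ℝ) = (m.descFactorial k : ℝ) / k.factorial := by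
    have := Nat.descFactorial_eq_factorial_mul_choose m k
    have h2 : (m.descFactorial k : ℝ) = (k.factorial : ℝ) * m.choose k := by exact_mod_cast this
    rw [h2]
    field_simp
  rw [pow_sub₀ _ hne hk, hprod, hchoose, div_pow]
  have hfk : (k.factorial : ℝ) ≠ 0 := Nat.cast_ne_zero.2 k.factorial_ne_zero
  ring

theorem stmt_4 (lam : ℕ) (hlam : 0 < lam) :
    Filter.Tendsto (fun m : ℕ => ∑ k ∈ Finset.range (m + 1),
        max (k : ℝ) (lam : ℝ) * (m.choose k) * ((lam : ℝ) / m) ^ k * (1 - (lam : ℝ) / m) ^ (m - k))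
      Filter.atTop
      (nhds ((lam : ℝ) + Real.exp (-(lam : ℝ)) * (lam : ℝ) ^ (lam + 1) / lam.factorial)) := by
  have tele : ∑ k ∈ range lam, (((lam : ℝ) - k) *
        (Real.exp (-(lam : ℝ)) * (lam : ℝ) ^ k / k.factorial))
      = Real.exp (-(lam : ℝ)) * (lam : ℝ) ^ (lam + 1) / lam.factorial := by
    have h := Finset.sum_range_sub
      (f := fun k : ℕ => Real.exp (-(lam : ℝ)) * k * (lam : ℝ) ^ k / k.factorial) lam
    have heq : ∀ k ∈ range lam, (((lam : ℝ) - k) *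
          (Real.exp (-(lam : ℝ)) * (lam : ℝ) ^ k / k.factorial))
        = Real.exp (-(lam : ℝ)) * (k + 1 : ℕ) * (lam : ℝ) ^ (k + 1) / (k + 1).factorial
          - Real.exp (-(lam : ℝ)) * k * (lam : ℝ) ^ k / k.factorial := by
      intro k _
      have hfk : (k.factorial : ℝ) ≠ 0 := Nat.cast_ne_zero.2 k.factorial_ne_zero
      rw [Nat.factorial_succ]
      push_cast
      have hk1 : (k : ℝ) + 1 ≠ 0 := by positivity
      field_simp
      ring
    rw [Finset.sum_congr rfl heq, h]
    simp [pow_succ]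
    ring
  have hlim : Tendsto (fun m : ℕ => (lam : ℝ) + ∑ k ∈ range lam, ((lam : ℝ) - k) *
        ((m.choose k : ℝ) * ((lam : ℝ) / m) ^ k * (1 - (lam : ℝ) / m) ^ (m - k)))
      atTop (nhds ((lam : ℝ) + Real.exp (-(lam : ℝ)) * (lam : ℝ) ^ (lam + 1) / lam.factorial)) := by
    rw [← tele]
    exact tendsto_const_nhds.add (tendsto_finset_sum _ fun k _ =>
      (poisson_term_limit lam k).const_mul _)
  refine hlim.congr' ?_
  filter_upwards [eventually_ge_atTop lam] with m hm
  have hm0 : 0 < m := lt_of_lt_of_le hlam hm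
  have hmR : (m : ℝ) ≠ 0 := Nat.cast_ne_zero.2 hm0.ne'
  -- binomial mean
  have mean : ∑ k ∈ range (m + 1), (k : ℝ) *
      ((m.choose k : ℝ) * ((lam : ℝ) / m) ^ k * (1 - (lam : ℝ) / m) ^ (m - k)) = lam := by
    have hb := congrArg (Polynomial.eval ((lam : ℝ) / m)) (bernsteinPolynomial.sum_smul (R := ℝ) m)
    simp only [Polynomial.eval_finset_sum, Polynomial.eval_smul, bernsteinPolynomial,
      Polynomial.eval_mul, Polynomial.eval_pow, Polynomial.eval_sub, Polynomial.eval_one,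
      Polynomial.eval_X, Polynomial.eval_natCast, nsmul_eq_mul, smul_eq_mul] at hb
    rw [hb]
    field_simp
  -- split the max
  have hsplit : ∀ k : ℕ, max (k : ℝ) (lam : ℝ) = (k : ℝ) + max ((lam : ℝ) - k) 0 := by
    intro k
    rcases le_total (k : ℝ) (lam : ℝ) with h | h
    · rw [max_eq_right h, max_eq_left (by linarith)]; ring
    · rw [max_eq_left h, max_eq_right (by linarith)]; ring
  have step1 : ∑ k ∈ Finset.range (m + 1),
      max (k : ℝ) (lam : ℝ) * (m.choose k) * ((lam : ℝ) / m) ^ k * (1 - (lam : ℝ) / m) ^ (m - k)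
    = (∑ k ∈ range (m + 1), (k : ℝ) *
        ((m.choose k : ℝ) * ((lam : ℝ) / m) ^ k * (1 - (lam : ℝ) / m) ^ (m - k)))
      + ∑ k ∈ range (m + 1), max ((lam : ℝ) - k) 0 *
        ((m.choose k : ℝ) * ((lam : ℝ) / m) ^ k * (1 - (lam : ℝ) / m) ^ (m - k)) := by
    rw [← Finset.sum_add_distrib]
    refine Finset.sum_congr rfl fun k _ => ?_
    rw [hsplit k]
    ring
  have step2 : ∑ k ∈ range (m + 1), max ((lam : ℝ) - k) 0 *
        ((m.choose k : ℝ) * ((lam : ℝ) / m) ^ k * (1 - (lam : ℝ) / m) ^ (m - k))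
      = ∑ k ∈ range lam, ((lam : ℝ) - k) *
        ((m.choose k : ℝ) * ((lam : ℝ) / m) ^ k * (1 - (lam : ℝ) / m) ^ (m - k)) := by
    rw [← Finset.sum_subset (Finset.range_subset_range.2 (le_trans hm (Nat.le_succ m)))]
    · refine Finset.sum_congr rfl fun k hk => ?_
      have hklt : k < lam := mem_range.1 hk
      rw [max_eq_left (by
        have : (k : ℝ) < lam := by exact_mod_cast hklt
        linarith)]
    · intro k _ hk
      have : lam ≤ k := by simpa using hk
      have : (lam : ℝ) - k ≤ 0 := by
        have : (lam : ℝ) ≤ k := by exact_mod_cast this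
        linarith
      rw [max_eq_right this, zero_mul]
  rw [step1, step2, mean]
end

section
/- Let $Y$ and $Z$ be independent nonnegative integrable random variables such that $\mathbb{P}[0 \leq Y \leq 1] = 1$. Then $\mathbb{E}[\max(Y + Z, 1)] \leq (1 - \mathbb{E}[Y]) \cdot \mathbb{E}[\max(Z, 1)] + \mathbb{E}[Y] \cdot \mathbb{E}[\max(1 + Z, 1)]$. In other words, among all distributions of $Y$ supported in $[0,1]$ with given mean $\mu = \mathbb{E}[Y]$, the expectation $\mathbb{E}[\max(Y+Z,1)]$ is maximized by the two-point (Bernoulli) distribution taking value $1$ with probability $\mu$ and $0$ with probability $1-\mu$. -/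
/-!
For fixed `z`, the map `y ↦ max (y + z) 1` is convex, so on `[0, 1]` it lies below its chord
`(1 - y) * max z 1 + y * max (1 + z) 1`. Taking expectations with `y = Y` and `z = Z`, the chord
is affine in `Y` with coefficients depending only on `Z`, so independence factors its expectation
into `(1 - 𝔼[Y]) * 𝔼[max Z 1] + 𝔼[Y] * 𝔼[max (1 + Z) 1]`.
-/

open MeasureTheory ProbabilityTheory

lemma max_add_le_one_sub_mul_add_mul {y : ℝ} (hy : y ∈ Set.Icc 0 1) (z : ℝ) :
    max (y + z) 1 ≤ (1 - y) * max z 1 + y * max (1 + z) 1 := by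
  obtain ⟨hy0, hy1⟩ := hy
  have hz := le_max_left z 1
  have hz1 := le_max_left (1 + z) 1
  have h1 := le_max_right z 1
  have h11 := le_max_right (1 + z) 1
  apply max_le <;> nlinarith

section

variable {Ω β : Type*} [MeasurableSpace Ω] {μ : Measure Ω} {Y : Ω → ℝ}

lemma MeasureTheory.Integrable.mul_of_ae_mem_Icc {F : Ω → ℝ} (hF : Integrable F μ)
    (hY : AEStronglyMeasurable Y μ) (hY01 : ∀ᵐ ω ∂μ, Y ω ∈ Set.Icc 0 1) :
    Integrable (fun ω => Y ω * F ω) μ :=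
  hF.bdd_mul (c := 1) hY <| hY01.mono fun _ ⟨h0, h1⟩ => by
    rw [Real.norm_eq_abs, abs_le]
    constructor <;> linarith

lemma ae_one_sub_mem_Icc (hY01 : ∀ᵐ ω ∂μ, Y ω ∈ Set.Icc 0 1) :
    ∀ᵐ ω ∂μ, 1 - Y ω ∈ Set.Icc 0 1 :=
  hY01.mono fun _ ⟨h0, h1⟩ => ⟨by linarith, by linarith⟩

variable [MeasurableSpace β] {Z : Ω → β} {f g : β → ℝ}

lemma ProbabilityTheory.IndepFun.integral_one_sub_mul_add_mul [IsProbabilityMeasure μ]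
    (hindep : IndepFun Y Z μ) (hY : Integrable Y μ) (hY01 : ∀ᵐ ω ∂μ, Y ω ∈ Set.Icc 0 1)
    (hfm : Measurable f) (hgm : Measurable g) (hf : Integrable (fun ω => f (Z ω)) μ)
    (hg : Integrable (fun ω => g (Z ω)) μ) :
    ∫ ω, ((1 - Y ω) * f (Z ω) + Y ω * g (Z ω)) ∂μ
      = (1 - ∫ ω, Y ω ∂μ) * ∫ ω, f (Z ω) ∂μ + (∫ ω, Y ω ∂μ) * ∫ ω, g (Z ω) ∂μ := by
  have hYm := hY.aestronglyMeasurable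
  have h1Ym : AEStronglyMeasurable (fun ω => 1 - Y ω) μ := aestronglyMeasurable_const.sub hYm
  have hf_indep : IndepFun (fun ω => 1 - Y ω) (fun ω => f (Z ω)) μ :=
    hindep.comp (measurable_const.sub measurable_id) hfm
  have hg_indep : IndepFun Y (fun ω => g (Z ω)) μ := hindep.comp measurable_id hgm
  have hf_mul := hf_indep.integral_mul_eq_mul_integral h1Ym hf.aestronglyMeasurable
  have hg_mul := hg_indep.integral_mul_eq_mul_integral hYm hg.aestronglyMeasurable
  simp only [Pi.mul_def] at hf_mul hg_mul
  rw [integral_add (hf.mul_of_ae_mem_Icc h1Ym (ae_one_sub_mem_Icc hY01))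
      (hg.mul_of_ae_mem_Icc hYm hY01), hf_mul, hg_mul,
    integral_sub (integrable_const 1) hY, integral_const, probReal_univ, one_smul]

end

theorem stmt_5_general {Ω : Type*} [MeasurableSpace Ω] (μ : Measure Ω) [IsProbabilityMeasure μ]
    (Y Z : Ω → ℝ) (hindep : IndepFun Y Z μ)
    (hYint : Integrable Y μ) (hZint : Integrable Z μ)
    (hY01 : ∀ᵐ ω ∂μ, 0 ≤ Y ω ∧ Y ω ≤ 1) :
    ∫ ω, max (Y ω + Z ω) 1 ∂μ ≤
      (1 - ∫ ω, Y ω ∂μ) * ∫ ω, max (Z ω) 1 ∂μ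
        + (∫ ω, Y ω ∂μ) * ∫ ω, max (1 + Z ω) 1 ∂μ := by
  have hmax : Integrable (fun ω => max (Z ω) 1) μ := hZint.sup (integrable_const 1)
  have hmax_succ : Integrable (fun ω => max (1 + Z ω) 1) μ :=
    ((integrable_const 1).add hZint).sup (integrable_const 1)
  rw [← hindep.integral_one_sub_mul_add_mul (f := fun z => max z 1) (g := fun z => max (1 + z) 1)
    hYint hY01 (by fun_prop) (by fun_prop) hmax hmax_succ]
  have hYm := hYint.aestronglyMeasurable
  refine integral_mono_ae ((hYint.add hZint).sup (integrable_const 1))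
    ((hmax.mul_of_ae_mem_Icc (aestronglyMeasurable_const.sub hYm) (ae_one_sub_mem_Icc hY01)).add
      (hmax_succ.mul_of_ae_mem_Icc hYm hY01)) ?_
  filter_upwards [hY01] with ω hY using max_add_le_one_sub_mul_add_mul hY (Z ω)

theorem stmt_5 {Ω : Type*} [MeasurableSpace Ω] (μ : Measure Ω) [IsProbabilityMeasure μ]
    (Y Z : Ω → ℝ) (hindep : IndepFun Y Z μ)
    (hYint : Integrable Y μ) (hZint : Integrable Z μ)
    (hY01 : ∀ᵐ ω ∂μ, 0 ≤ Y ω ∧ Y ω ≤ 1) (hZ0 : ∀ᵐ ω ∂μ, 0 ≤ Z ω) :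
    ∫ ω, max (Y ω + Z ω) 1 ∂μ ≤
      (1 - ∫ ω, Y ω ∂μ) * ∫ ω, max (Z ω) 1 ∂μ
        + (∫ ω, Y ω ∂μ) * ∫ ω, max (1 + Z ω) 1 ∂μ :=
  stmt_5_general μ Y Z hindep hYint hZint hY01
end

section
/- Fix $\ell > 0$ and define $h: [0,1] \to \mathbb{R}$ by $h(y) = (1-y)^{1 + \ell/y}$ for $y \in (0,1]$ and $h(0) = e^{-\ell}$ (the continuous extension at $0$). Then $h$ is convex on $[0,1]$. -/
/-!
On `(0, 1)` we have `h = exp ∘ logH` with `logH y = (1 + ℓ / y) log (1 - y)`, so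
`h'' = h · (logH' ^ 2 + logH'')`. Clearing denominators,
`y⁴ (1 - y)² (logH' ^ 2 + logH'') = ℓ (ℓ (y + t log t) ^ 2 + y (1 - t ^ 2 + 2 t log t))` with
`t = 1 - y`, and `t ^ 2 - 1 ≤ 2 t log t` on `(0, 1]` is `s ≤ sinh s` for `s = -log t`.
Continuity at `0` comes from `log (1 - y) / y → -1`, and at `1` from the exponent `1 + ℓ` being
positive.
-/

open Real Set Filter Topology

noncomputable section

def h (ℓ y : ℝ) : ℝ := if y = 0 then exp (-ℓ) else (1 - y) ^ (1 + ℓ / y)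

def logH (ℓ y : ℝ) : ℝ := (1 + ℓ / y) * log (1 - y)

def logH' (ℓ y : ℝ) : ℝ := -(ℓ / y ^ 2) * log (1 - y) - (1 + ℓ / y) / (1 - y)

def logH'' (ℓ y : ℝ) : ℝ :=
  2 * ℓ / y ^ 3 * log (1 - y) + 2 * ℓ / (y ^ 2 * (1 - y)) - (1 + ℓ / y) / (1 - y) ^ 2

end

theorem hasDerivAt_log_one_sub {y : ℝ} (hy : y ≠ 1) :
    HasDerivAt (fun z => log (1 - z)) (-1 / (1 - y)) y := by
  simpa using ((hasDerivAt_id y).const_sub 1).log (sub_ne_zero.mpr hy.symm)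

theorem hasDerivAt_logH (ℓ : ℝ) {y : ℝ} (hy₀ : y ≠ 0) (hy₁ : y ≠ 1) :
    HasDerivAt (logH ℓ) (logH' ℓ y) y := by
  refine ((((hasDerivAt_const y ℓ).div (hasDerivAt_id y) hy₀).const_add 1).mul
    (hasDerivAt_log_one_sub hy₁)).congr_deriv ?_
  simp only [logH', Pi.div_apply, id]
  field_simp
  ring

theorem hasDerivAt_logH' (ℓ : ℝ) {y : ℝ} (hy₀ : y ≠ 0) (hy₁ : y ≠ 1) :
    HasDerivAt (logH' ℓ) (logH'' ℓ y) y := by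
  have hsub : 1 - y ≠ 0 := sub_ne_zero.mpr hy₁.symm
  have hdiv := (hasDerivAt_const y ℓ).div (hasDerivAt_id y) hy₀
  have hdiv2 := (hasDerivAt_const y ℓ).div ((hasDerivAt_id y).pow 2) (pow_ne_zero 2 hy₀)
  refine ((hdiv2.neg.mul (hasDerivAt_log_one_sub hy₁)).sub
    ((hdiv.const_add 1).div ((hasDerivAt_id y).const_sub 1) hsub)).congr_deriv ?_
  simp only [logH'', Pi.div_apply, Pi.pow_apply, Pi.neg_apply, id]
  field_simp
  ring

theorem Real.sq_sub_one_le_two_mul_mul_log {t : ℝ} (ht₀ : 0 < t) (ht₁ : t ≤ 1) :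
    t ^ 2 - 1 ≤ 2 * t * log t := by
  have hsinh := self_le_sinh_iff.mpr (neg_nonneg.mpr (log_nonpos ht₀.le ht₁))
  rw [sinh_neg, sinh_eq, exp_neg, exp_log ht₀] at hsinh
  have hmul : t * (t - t⁻¹) ≤ t * (2 * log t) := by
    gcongr
    linarith
  rwa [mul_sub, mul_inv_cancel₀ ht₀.ne', ← sq, ← mul_assoc, mul_comm t] at hmul

theorem logH'_sq_add_logH''_nonneg {ℓ y : ℝ} (hℓ : 0 ≤ ℓ) (hy₀ : 0 < y) (hy₁ : y < 1) :
    0 ≤ logH' ℓ y ^ 2 + logH'' ℓ y := by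
  have hy₁' : 0 < 1 - y := by linarith
  have hlog := Real.sq_sub_one_le_two_mul_mul_log hy₁' (by linarith)
  have hid : logH' ℓ y ^ 2 + logH'' ℓ y =
      ℓ * (ℓ * (y + (1 - y) * log (1 - y)) ^ 2
        + y * (1 - (1 - y) ^ 2 + 2 * (1 - y) * log (1 - y))) / (y ^ 4 * (1 - y) ^ 2) := by
    simp only [logH', logH'']
    field_simp
    ring
  rw [hid]
  have hbracket : 0 ≤ 1 - (1 - y) ^ 2 + 2 * (1 - y) * log (1 - y) := by linarith
  positivity

theorem h_eq_exp_logH (ℓ : ℝ) {y : ℝ} (hy₀ : y ≠ 0) (hy₁ : y < 1) :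
    h ℓ y = exp (logH ℓ y) := by
  rw [h, if_neg hy₀, rpow_def_of_pos (by linarith), logH, mul_comm]

theorem tendsto_logH_nhdsNE_zero (ℓ : ℝ) : Tendsto (logH ℓ) (𝓝[≠] 0) (𝓝 (-ℓ)) := by
  have hslope : Tendsto (fun y => y⁻¹ * log (1 - y)) (𝓝[≠] 0) (𝓝 (-1)) := by
    simpa using hasDerivAt_iff_tendsto_slope_zero.mp (hasDerivAt_log_one_sub zero_ne_one)
  have hlog : Tendsto (fun y => log (1 - y)) (𝓝[≠] 0) (𝓝 0) := by
    have : ContinuousAt (fun y => log (1 - y)) 0 :=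
      (continuousAt_const.sub continuousAt_id).log (by norm_num)
    simpa using this.tendsto.mono_left nhdsWithin_le_nhds
  convert hlog.add (hslope.const_mul ℓ) using 2 with y
  · simp only [logH]
    ring
  · ring

theorem continuousOn_h {ℓ : ℝ} (hℓ : 0 ≤ ℓ) : ContinuousOn (h ℓ) (Icc 0 1) := by
  intro x hx
  rcases hx.1.eq_or_lt with rfl | hx₀
  · have hlim : Tendsto (h ℓ) (𝓝[>] 0) (𝓝 (h ℓ 0)) := by
      rw [show h ℓ 0 = exp (-ℓ) from if_pos rfl]
      refine ((continuous_exp.tendsto _).comp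
        ((tendsto_logH_nhdsNE_zero ℓ).mono_left (nhdsGT_le_nhdsNE 0))).congr' ?_
      filter_upwards [Ioo_mem_nhdsGT zero_lt_one] with y hy
      exact (h_eq_exp_logH ℓ hy.1.ne' hy.2).symm
    exact (continuousWithinAt_Ioi_iff_Ici.mp hlim).mono Icc_subset_Ici_self
  · have hrpow : ContinuousAt (fun y => (1 - y) ^ (1 + ℓ / y)) x :=
      (continuousAt_const.sub continuousAt_id).rpow
        (continuousAt_const.add (continuousAt_const.div continuousAt_id hx₀.ne'))
        (Or.inr (by positivity))
    refine (hrpow.congr ?_).continuousWithinAt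
    filter_upwards [eventually_ne_nhds hx₀.ne'] with y hy
    exact (if_neg hy).symm

theorem stmt_8 (ℓ : ℝ) (hℓ : 0 < ℓ) :
    ConvexOn ℝ (Set.Icc (0:ℝ) 1)
      (fun y : ℝ => if y = 0 then Real.exp (-ℓ) else (1 - y) ^ (1 + ℓ / y)) := by
  refine convexOn_of_hasDerivWithinAt2_nonneg (convex_Icc 0 1) (continuousOn_h hℓ.le)
    (f' := fun y => exp (logH ℓ y) * logH' ℓ y)
    (f'' := fun y => exp (logH ℓ y) * (logH' ℓ y ^ 2 + logH'' ℓ y)) ?_ ?_ ?_ <;>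
    rw [interior_Icc] <;> rintro y ⟨hy₀, hy₁⟩
  · have hexp : h ℓ =ᶠ[𝓝 y] fun z => exp (logH ℓ z) := by
      filter_upwards [Ioo_mem_nhds hy₀ hy₁] with z hz
      exact h_eq_exp_logH ℓ hz.1.ne' hz.2
    exact ((hasDerivAt_logH ℓ hy₀.ne' hy₁.ne).exp.congr_of_eventuallyEq hexp).hasDerivWithinAt
  · exact ((hasDerivAt_logH ℓ hy₀.ne' hy₁.ne).exp.mul
      (hasDerivAt_logH' ℓ hy₀.ne' hy₁.ne)).hasDerivWithinAt.congr_deriv (by ring)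
  · exact mul_nonneg (exp_pos _).le (logH'_sq_add_logH''_nonneg hℓ.le hy₀ hy₁)
end

section
/- For each integer $k \geq 2$, define $\gamma_k := \sum_{i=1}^{k-1} \frac{1}{i(k-i)}$. Then for all integers $k \geq 5$, it holds that $\gamma_k + \gamma_{k-2} - 2\gamma_{k-1} \geq 0$. -/
/-- `γ k = ∑_{i=1}^{k-1} 1/(i (k-i))`, the coefficients of the power series of `log²(1-y)`. -/
noncomputable def gammaCoeff (k : ℕ) : ℝ :=
  ∑ i ∈ Finset.Ico 1 k, 1 / ((i : ℝ) * ((k : ℝ) - (i : ℝ)))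

noncomputable def Hsum (n : ℕ) : ℝ := ∑ i ∈ Finset.Ico 1 (n+1), 1/(i:ℝ)

lemma reflect (k : ℕ) :
    ∑ i ∈ Finset.Ico 1 k, 1/((k:ℝ) - (i:ℝ)) = ∑ i ∈ Finset.Ico 1 k, 1/(i:ℝ) := by
  apply Finset.sum_nbij' (fun i => k - i) (fun i => k - i)
  · intro a ha; simp only [Finset.mem_Ico] at *; omega
  · intro a ha; simp only [Finset.mem_Ico] at *; omega
  · intro a ha; simp only [Finset.mem_Ico] at ha; omega
  · intro a ha; simp only [Finset.mem_Ico] at ha; omega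
  · intro a ha
    simp only [Finset.mem_Ico] at ha
    have : ((k - a : ℕ) : ℝ) = (k:ℝ) - (a:ℝ) := by
      have := ha.2; push_cast [Nat.cast_sub (le_of_lt ha.2)]; ring
    rw [this]

lemma gamma_eq (k : ℕ) (hk : 1 ≤ k) : gammaCoeff k = 2 * Hsum (k-1) / k := by
  have h1 : k - 1 + 1 = k := by omega
  rw [gammaCoeff, Hsum, h1]
  have step : ∀ i ∈ Finset.Ico 1 k,
      1/((i:ℝ)*((k:ℝ)-(i:ℝ))) = (1/(i:ℝ) + 1/((k:ℝ)-(i:ℝ))) / k := by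
    intro i hi
    simp only [Finset.mem_Ico] at hi
    have hi0 : (0:ℝ) < i := by exact_mod_cast hi.1
    have hki : (0:ℝ) < (k:ℝ) - i := by
      have : (i:ℝ) < k := by exact_mod_cast hi.2
      linarith
    field_simp
    try ring
  rw [Finset.sum_congr rfl step, ← Finset.sum_div, Finset.sum_add_distrib, reflect]
  ring

lemma Hsum_succ (n : ℕ) : Hsum (n+1) = Hsum n + 1/((n:ℝ)+1) := by
  rw [Hsum, Hsum, Finset.sum_Ico_succ_top (by omega)]
  push_cast
  ring

lemma Hsum_ge (n : ℕ) (hn : 3 ≤ n) : Hsum n ≥ 11/6 := by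
  have hle : Hsum 3 ≤ Hsum n := by
    apply Finset.sum_le_sum_of_subset_of_nonneg
    · apply Finset.Ico_subset_Ico le_rfl; omega
    · intros; positivity
  have h3 : Hsum 3 = 11/6 := by
    rw [Hsum]
    rw [Finset.sum_Ico_succ_top (by omega), Finset.sum_Ico_succ_top (by omega),
      Finset.sum_Ico_succ_top (by omega)]
    norm_num
  linarith [hle, h3.symm.le]

theorem stmt_9 (k : ℕ) (hk : 5 ≤ k) :
    gammaCoeff k + gammaCoeff (k - 2) - 2 * gammaCoeff (k - 1) ≥ 0 := by
  obtain ⟨n, rfl⟩ : ∃ n, k = n + 2 := ⟨k - 2, by omega⟩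
  have hn : 3 ≤ n := by omega
  have h2 : n + 2 - 2 = n := by omega
  have h1 : n + 2 - 1 = n + 1 := by omega
  rw [h2, h1, gamma_eq (n+2) (by omega), gamma_eq (n+1) (by omega), gamma_eq n (by omega)]
  have e1 : n + 2 - 1 = n + 1 := by omega
  have e2 : n + 1 - 1 = n := by omega
  rw [e1, e2]
  set x : ℝ := (n : ℝ) with hxdef
  have hx : (3:ℝ) ≤ x := by rw [hxdef]; exact_mod_cast hn
  have hx0 : (0:ℝ) < x := by linarith
  -- Hsum (n+1) and Hsum (n-1) in terms of Hsum n
  have hs1 : Hsum (n+1) = Hsum n + 1/(x+1) := Hsum_succ n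
  have hs2 : Hsum n = Hsum (n-1) + 1/x := by
    have : n - 1 + 1 = n := by omega
    have h := Hsum_succ (n-1)
    rw [this] at h
    rw [h]
    congr 1
    have : ((n-1 : ℕ):ℝ) = x - 1 := by
      push_cast [Nat.cast_sub (by omega : 1 ≤ n)]; ring
    rw [this]; ring
  set h : ℝ := Hsum n with hdef
  have key : h ≥ 3/2 + 1/x := by
    have h1 : h ≥ 11/6 := Hsum_ge n hn
    have h2 : 1/x ≤ 1/3 := by
      rw [div_le_div_iff₀ hx0 (by norm_num)]; linarith
    linarith
  have hcast1 : ((n+2 : ℕ):ℝ) = x + 2 := by push_cast; ring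
  have hcast2 : ((n+1 : ℕ):ℝ) = x + 1 := by push_cast; ring
  rw [hs1, hcast1, hcast2]
  have hHn1 : Hsum (n-1) = h - 1/x := by rw [hdef] at hs2 ⊢; linarith
  rw [hHn1]
  have hx1 : (0:ℝ) < x + 1 := by linarith
  have hx2 : (0:ℝ) < x + 2 := by linarith
  have expand : 2 * (h + 1/(x+1)) / (x+2) + 2 * (h - 1/x) / x - 2 * (2 * h / (x+1))
      = (4*x*h + 2*x^2 - 2*(x+1)*(x+2)) / (x^2*(x+1)*(x+2)) := by
    field_simp
    try ring
  rw [ge_iff_le, show (0:ℝ) = 0 from rfl]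
  calc (0:ℝ) ≤ (4*x*h + 2*x^2 - 2*(x+1)*(x+2)) / (x^2*(x+1)*(x+2)) := by
        apply div_nonneg
        · have hxx : x * (1/x) = 1 := by field_simp
          nlinarith [mul_nonneg (by linarith : (0:ℝ) ≤ 4*x) (sub_nonneg.mpr key)]
        · positivity
    _ = 2 * (h + 1/(x+1)) / (x+2) + 2 * (h - 1/x) / x - 2 * (2 * h / (x+1)) := expand.symm
end

section
/- Let $m$ be a positive integer, let $\rho > 0$ and $\ell \in (0, \rho]$, and let $y_1, \ldots, y_m \in [0,1]$ satisfy $\sum_{i=1}^m y_i = m(\rho - \ell)$. Define $h(y) = (1-y)^{1 + \ell/y}$ for $y \in (0,1]$ and $h(0) = e^{-\ell}$. Then $\sum_{i=1}^m h(y_i) \leq m \, e^{-\rho}$. -/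
/-! Since `1 - t ≤ exp (-t)`, each term satisfies `h(t) = (1 - t) (1 - t)^(ℓ/t) ≤ e^{-ℓ} (1 - t)`, which is
linear in `t`. Summing and using the constraint on `∑ yᵢ` gives `m e^{-ℓ} (1 + (ℓ - ρ))`, and one more
application of `1 + x ≤ eˣ` bounds this by `m e^{-ρ}`. -/

open Real

lemma one_sub_rpow_div_le_exp_neg {t ℓ : ℝ} (ht : 0 < t) (ht1 : t ≤ 1) (hℓ : 0 ≤ ℓ) :
    (1 - t) ^ (ℓ / t) ≤ exp (-ℓ) :=
  calc (1 - t) ^ (ℓ / t) ≤ exp (-t) ^ (ℓ / t) :=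
        rpow_le_rpow (by linarith) (by linarith [add_one_le_exp (-t)]) (by positivity)
    _ = exp (-ℓ) := by rw [← exp_mul, neg_mul, mul_div_cancel₀ ℓ ht.ne']

lemma ite_one_sub_rpow_le_exp_neg_mul {t ℓ : ℝ} (ht : t ∈ Set.Icc (0 : ℝ) 1) (hℓ : 0 ≤ ℓ) :
    (if t = 0 then exp (-ℓ) else (1 - t) ^ (1 + ℓ / t)) ≤ exp (-ℓ) * (1 - t) := by
  obtain ⟨ht0, ht1⟩ := ht
  split_ifs with h0
  · simp [h0]
  have htpos : 0 < t := lt_of_le_of_ne ht0 (Ne.symm h0)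
  rw [rpow_add' (by linarith) (by positivity), rpow_one, mul_comm]
  exact mul_le_mul_of_nonneg_right (one_sub_rpow_div_le_exp_neg htpos ht1 hℓ) (by linarith)

lemma exp_mul_one_add_le_exp_add (a b : ℝ) : exp a * (1 + b) ≤ exp (a + b) := by
  rw [exp_add]
  exact mul_le_mul_of_nonneg_left (by linarith [add_one_le_exp b]) (exp_pos a).le

theorem stmt_11_general (m : ℕ) (ρ ℓ : ℝ) (hℓ : 0 < ℓ)
    (y : Fin m → ℝ) (hy : ∀ i, y i ∈ Set.Icc (0:ℝ) 1)
    (hsum : ∑ i, y i = (m : ℝ) * (ρ - ℓ)) :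
    ∑ i, (if y i = 0 then Real.exp (-ℓ) else (1 - y i) ^ (1 + ℓ / y i))
      ≤ (m : ℝ) * Real.exp (-ρ) := by
  have hlinear : ∑ i, exp (-ℓ) * (1 - y i) = m * (exp (-ℓ) * (1 + (ℓ - ρ))) := by
    rw [← Finset.mul_sum, Finset.sum_sub_distrib, hsum]
    simp only [Finset.sum_const, Finset.card_univ, Fintype.card_fin, nsmul_eq_mul, mul_one]
    ring
  calc _ ≤ ∑ i, exp (-ℓ) * (1 - y i) :=
        Finset.sum_le_sum fun i _ => ite_one_sub_rpow_le_exp_neg_mul (hy i) hℓ.le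
    _ = m * (exp (-ℓ) * (1 + (ℓ - ρ))) := hlinear
    _ ≤ m * exp (-ρ) := by
        gcongr
        rw [show -ρ = -ℓ + (ℓ - ρ) by ring]
        exact exp_mul_one_add_le_exp_add (-ℓ) (ℓ - ρ)

theorem stmt_11 (m : ℕ) (hm : 0 < m) (ρ ℓ : ℝ) (hρ : 0 < ρ) (hℓ : 0 < ℓ) (hℓρ : ℓ ≤ ρ)
    (y : Fin m → ℝ) (hy : ∀ i, y i ∈ Set.Icc (0:ℝ) 1)
    (hsum : ∑ i, y i = (m : ℝ) * (ρ - ℓ)) :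
    ∑ i, (if y i = 0 then Real.exp (-ℓ) else (1 - y i) ^ (1 + ℓ / y i))
      ≤ (m : ℝ) * Real.exp (-ρ) :=
  stmt_11_general m ρ ℓ hℓ y hy hsum
end

section
/- Let $n \geq 1$ and $m \geq 1$ be integers, and for $p = (p_1, \ldots, p_n) \in \mathbb{R}_{\geq 0}^n$ define $\mathrm{OPT}(p) := \min_{a : \{1,\ldots,n\} \to \{1,\ldots,m\}} \sum_{i=1}^m \max\left(\sum_{j : a(j) = i} p_j, \, 1\right)$. Let $p' = (p'_1, \ldots, p'_n)$ with $p'_j = \min(p_j, 1)$ be the truncated processing times. Then $\mathrm{OPT}(p) = \mathrm{OPT}(p') + \sum_{j=1}^n \max(p_j - 1, 0)$. -/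
/-- The optimal cost of assigning `n` jobs with deterministic processing times `p` to `m`
machines of unit regular capacity, where a machine with workload `x` costs `max x 1`. -/
noncomputable def OPT (m n : ℕ) (p : Fin n → ℝ) : ℝ :=
  ⨅ a : Fin n → Fin m,
    ∑ i, max (∑ j ∈ Finset.univ.filter (fun j => a j = i), p j) 1

theorem stmt_12 (n m : ℕ) (hn : 1 ≤ n) (hm : 1 ≤ m) (p : Fin n → ℝ) (hp : ∀ j, 0 ≤ p j) :
    OPT m n p = OPT m n (fun j => min (p j) 1) + ∑ j, max (p j - 1) 0 := by
  have hmne : Nonempty (Fin m) := ⟨⟨0, hm⟩⟩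
  have key : ∀ a : Fin n → Fin m,
      (∑ i, max (∑ j ∈ Finset.univ.filter (fun j => a j = i), p j) 1)
      = (∑ i, max (∑ j ∈ Finset.univ.filter (fun j => a j = i), min (p j) 1) 1)
        + ∑ j, max (p j - 1) 0 := by
    intro a
    have hfib : ∀ f : Fin n → ℝ,
        ∑ i, ∑ j ∈ Finset.univ.filter (fun j => a j = i), f j = ∑ j, f j := by
      intro f
      exact Finset.sum_fiberwise Finset.univ a f
    rw [← hfib (fun j => max (p j - 1) 0), ← Finset.sum_add_distrib]
    apply Finset.sum_congr rfl
    intro i _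
    set S := Finset.univ.filter (fun j => a j = i) with hS
    have hsplit : ∑ j ∈ S, p j = (∑ j ∈ S, min (p j) 1) + ∑ j ∈ S, max (p j - 1) 0 := by
      rw [← Finset.sum_add_distrib]
      apply Finset.sum_congr rfl
      intro j _
      rcases le_total (p j) 1 with h | h
      · rw [min_eq_left h, max_eq_right (by linarith)]; ring
      · rw [min_eq_right h, max_eq_left (by linarith)]; ring
    have hE : (0:ℝ) ≤ ∑ j ∈ S, max (p j - 1) 0 :=
      Finset.sum_nonneg fun j _ => le_max_right _ _
    rcases eq_or_lt_of_le hE with hE0 | hEpos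
    · rw [hsplit, ← hE0, add_zero, add_zero]
    · -- some job in S has p j > 1, so ∑ min ≥ 1
      obtain ⟨j, hjS, hj⟩ : ∃ j ∈ S, 0 < max (p j - 1) 0 := by
        by_contra h
        push_neg at h
        have : ∑ j ∈ S, max (p j - 1) 0 ≤ 0 :=
          Finset.sum_nonpos fun j hjS => h j hjS
        linarith
      have hpj : 1 ≤ p j := by
        rcases le_or_gt (p j) 1 with h | h
        · simp [max_eq_right (by linarith : p j - 1 ≤ 0)] at hj
        · linarith
      have hL' : (1:ℝ) ≤ ∑ k ∈ S, min (p k) 1 := by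
        have := Finset.single_le_sum (f := fun k => min (p k) 1)
          (fun k _ => le_min (hp k) zero_le_one) hjS
        have : min (p j) 1 = 1 := min_eq_right hpj
        calc (1:ℝ) = min (p j) 1 := this.symm
          _ ≤ ∑ k ∈ S, min (p k) 1 :=
            Finset.single_le_sum (fun k _ => le_min (hp k) zero_le_one) hjS
      rw [hsplit, max_eq_left (by linarith), max_eq_left hL']
  unfold OPT
  have hbdd : BddBelow (Set.range fun a : Fin n → Fin m =>
      ∑ i, max (∑ j ∈ Finset.univ.filter (fun j => a j = i), min (p j) 1) 1) :=
    (Set.finite_range _).bddBelow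
  rw [ciInf_add hbdd]
  exact iInf_congr key
end

section
/- Let $n \geq 1$ and $m \geq 1$ be integers, and for $p = (p_1, \ldots, p_n) \in \mathbb{R}_{\geq 0}^n$ define $\mathrm{OPT}(p) := \min_{a : \{1,\ldots,n\} \to \{1,\ldots,m\}} \sum_{i=1}^m \max\left(\sum_{j : a(j) = i} p_j, \, 1\right)$. Let $P_1, \ldots, P_n$ be nonnegative integrable random variables. Then $\mathbb{E}[\mathrm{OPT}(P_1, \ldots, P_n)] \geq \max\left(\sum_{j=1}^n \mathbb{E}[P_j], \; m + \sum_{j=1}^n \mathbb{E}[\max(P_j - 1, 0)]\right)$. -/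
open MeasureTheory

lemma cost_ge_m (m n : ℕ) (p : Fin n → ℝ) (a : Fin n → Fin m) :
    (m : ℝ) ≤ ∑ i, max (∑ j ∈ Finset.univ.filter (fun j => a j = i), p j) 1 := by
  calc (m : ℝ) = ∑ _i : Fin m, (1 : ℝ) := by simp
    _ ≤ _ := Finset.sum_le_sum fun i _ => le_max_right _ _

lemma opt_ge_m (m n : ℕ) (hm : 1 ≤ m) (p : Fin n → ℝ) : (m : ℝ) ≤ OPT m n p := by
  have : Nonempty (Fin m) := ⟨⟨0, hm⟩⟩
  exact le_ciInf (cost_ge_m m n p)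

lemma sum_fiber (m n : ℕ) (a : Fin n → Fin m) (f : Fin n → ℝ) :
    ∑ i, ∑ j ∈ Finset.univ.filter (fun j => a j = i), f j = ∑ j, f j :=
  Finset.sum_fiberwise_of_maps_to (fun x _ => Finset.mem_univ (a x)) f

lemma opt_ge_sum (m n : ℕ) (hm : 1 ≤ m) (p : Fin n → ℝ) (hp : ∀ j, 0 ≤ p j) :
    ∑ j, p j ≤ OPT m n p := by
  have : Nonempty (Fin m) := ⟨⟨0, hm⟩⟩
  refine le_ciInf fun a => ?_
  calc ∑ j, p j = ∑ i, ∑ j ∈ Finset.univ.filter (fun j => a j = i), p j :=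
        (sum_fiber m n a p).symm
    _ ≤ _ := Finset.sum_le_sum fun i _ => le_max_left _ _

lemma sum_max_le (n : ℕ) (A : Finset (Fin n)) (p : Fin n → ℝ) (hp : ∀ j, 0 ≤ p j) :
    ∑ j ∈ A, max (p j - 1) 0 ≤ max (∑ j ∈ A, p j - 1) 0 := by
  by_cases h : ∃ k ∈ A, 1 ≤ p k
  · obtain ⟨k, hk, hk1⟩ := h
    have : ∑ j ∈ A, max (p j - 1) 0 = max (p k - 1) 0 + ∑ j ∈ A.erase k, max (p j - 1) 0 :=
      (Finset.add_sum_erase A _ hk).symm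
    rw [this]
    have h1 : max (p k - 1) 0 = p k - 1 := max_eq_left (by linarith)
    have h2 : ∑ j ∈ A.erase k, max (p j - 1) 0 ≤ ∑ j ∈ A.erase k, p j :=
      Finset.sum_le_sum fun j _ => max_le (by linarith [hp j]) (hp j)
    have h3 : p k + ∑ j ∈ A.erase k, p j = ∑ j ∈ A, p j := Finset.add_sum_erase A _ hk
    calc max (p k - 1) 0 + ∑ j ∈ A.erase k, max (p j - 1) 0
        ≤ (p k - 1) + ∑ j ∈ A.erase k, p j := by rw [h1]; linarith
      _ = ∑ j ∈ A, p j - 1 := by linarith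
      _ ≤ max (∑ j ∈ A, p j - 1) 0 := le_max_left _ _
  · push_neg at h
    have : ∑ j ∈ A, max (p j - 1) 0 = 0 :=
      Finset.sum_eq_zero fun j hj => max_eq_right (by linarith [h j hj])
    rw [this]; exact le_max_right _ _

lemma opt_ge_m_add (m n : ℕ) (hm : 1 ≤ m) (p : Fin n → ℝ) (hp : ∀ j, 0 ≤ p j) :
    (m : ℝ) + ∑ j, max (p j - 1) 0 ≤ OPT m n p := by
  have : Nonempty (Fin m) := ⟨⟨0, hm⟩⟩
  refine le_ciInf fun a => ?_
  have key : ∀ i : Fin m, 1 + ∑ j ∈ Finset.univ.filter (fun j => a j = i), max (p j - 1) 0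
      ≤ max (∑ j ∈ Finset.univ.filter (fun j => a j = i), p j) 1 := by
    intro i
    have h1 := sum_max_le n (Finset.univ.filter (fun j => a j = i)) p hp
    have h2 : max (∑ j ∈ Finset.univ.filter (fun j => a j = i), p j) 1
        = 1 + max (∑ j ∈ Finset.univ.filter (fun j => a j = i), p j - 1) 0 := by
      rcases le_total (∑ j ∈ Finset.univ.filter (fun j => a j = i), p j) 1 with h | h
      · rw [max_eq_right h, max_eq_right (by linarith)]; ring
      · rw [max_eq_left h, max_eq_left (by linarith)]; ring
    linarith
  calc (m : ℝ) + ∑ j, max (p j - 1) 0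
      = ∑ i : Fin m, (1 + ∑ j ∈ Finset.univ.filter (fun j => a j = i), max (p j - 1) 0) := by
        rw [Finset.sum_add_distrib, sum_fiber m n a (fun j => max (p j - 1) 0)]; simp
    _ ≤ _ := Finset.sum_le_sum fun i _ => key i

lemma opt_le (m n : ℕ) (hm : 1 ≤ m) (p : Fin n → ℝ) (hp : ∀ j, 0 ≤ p j) :
    OPT m n p ≤ (m : ℝ) + ∑ j, p j := by
  have hmne : Nonempty (Fin m) := ⟨⟨0, hm⟩⟩
  have hbdd : BddBelow (Set.range fun a : Fin n → Fin m =>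
      ∑ i, max (∑ j ∈ Finset.univ.filter (fun j => a j = i), p j) 1) :=
    ⟨(m : ℝ), by rintro x ⟨a, rfl⟩; exact cost_ge_m m n p a⟩
  refine le_trans (ciInf_le hbdd (fun _ => ⟨0, hm⟩)) ?_
  refine le_trans (Finset.sum_le_sum (g := fun i : Fin m =>
      (if i = ⟨0, hm⟩ then ∑ j, p j else 0) + 1) fun i _ => ?_) ?_
  · by_cases hi : i = (⟨0, hm⟩ : Fin m)
    · have hs : 0 ≤ ∑ j, p j := Finset.sum_nonneg fun j _ => hp j
      simp only [hi, eq_self_iff_true, if_true, Finset.filter_true]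
      exact max_le (by linarith) (by linarith)
    · simp only [if_neg hi]
      refine max_le ?_ (by norm_num)
      have : Finset.univ.filter (fun j : Fin n => (⟨0, hm⟩ : Fin m) = i) = ∅ := by
        ext j; simp [Ne.symm hi]
      rw [this]; simp
  · rw [Finset.sum_add_distrib, Finset.sum_ite_eq' Finset.univ (⟨0, hm⟩ : Fin m)]
    simp [add_comm]

theorem stmt_13 {Ω : Type*} [MeasurableSpace Ω] (μ : Measure Ω) [IsProbabilityMeasure μ]
    (n m : ℕ) (hn : 1 ≤ n) (hm : 1 ≤ m) (P : Fin n → Ω → ℝ)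
    (hint : ∀ j, Integrable (P j) μ) (hpos : ∀ j, ∀ᵐ ω ∂μ, 0 ≤ P j ω) :
    max (∑ j, ∫ ω, P j ω ∂μ) ((m : ℝ) + ∑ j, ∫ ω, max (P j ω - 1) 0 ∂μ)
      ≤ ∫ ω, OPT m n (fun j => P j ω) ∂μ := by
  have hmne : Nonempty (Fin m) := ⟨⟨0, hm⟩⟩
  have hae : ∀ᵐ ω ∂μ, ∀ j, 0 ≤ P j ω := (ae_all_iff).2 hpos
  -- measurability of OPT composed
  have hmeas : AEStronglyMeasurable (fun ω => OPT m n (fun j => P j ω)) μ := by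
    have : ∀ a : Fin n → Fin m, AEMeasurable (fun ω =>
        ∑ i, max (∑ j ∈ Finset.univ.filter (fun j => a j = i), P j ω) 1) μ := by
      intro a
      refine Finset.aemeasurable_fun_sum _ fun i _ => ?_
      exact (Finset.aemeasurable_fun_sum _ fun j _ => (hint j).aemeasurable).max aemeasurable_const
    exact (AEMeasurable.iInf this).aestronglyMeasurable
  -- integrability of OPT composed
  have hOPTint : Integrable (fun ω => OPT m n (fun j => P j ω)) μ := by
    refine Integrable.mono' (g := fun ω => (m : ℝ) + ∑ j, P j ω)
      ((integrable_const _).add (integrable_finset_sum _ fun j _ => hint j)) hmeas ?_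
    filter_upwards [hae] with ω hω
    rw [Real.norm_eq_abs, abs_of_nonneg (le_trans (by positivity) (opt_ge_m m n hm _))]
    exact opt_le m n hm _ hω
  refine max_le ?_ ?_
  · rw [← integral_finset_sum _ fun j _ => hint j]
    refine integral_mono_ae (integrable_finset_sum _ fun j _ => hint j) hOPTint ?_
    filter_upwards [hae] with ω hω
    exact opt_ge_sum m n hm _ hω
  · have hintmax : ∀ j, Integrable (fun ω => max (P j ω - 1) 0) μ := by
      intro j
      have : (fun ω => max (P j ω - 1) 0) = (fun ω => P j ω - 1) ⊔ (fun _ => 0) := rfl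
      rw [this]
      exact ((hint j).sub (integrable_const 1)).sup (integrable_const 0)
    have : (m : ℝ) + ∑ j, ∫ ω, max (P j ω - 1) 0 ∂μ
        = ∫ ω, ((m : ℝ) + ∑ j, max (P j ω - 1) 0) ∂μ := by
      rw [integral_add (integrable_const _) (integrable_finset_sum _ fun j _ => hintmax j),
        integral_const, integral_finset_sum _ fun j _ => hintmax j]
      simp
    rw [this]
    refine integral_mono_ae ((integrable_const _).add
      (integrable_finset_sum _ fun j _ => hintmax j)) hOPTint ?_
    filter_upwards [hae] with ω hω
    exact opt_ge_m_add m n hm _ hω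
end

section
/- For all real $\ell > 0$ and all real $u \geq 0$, it holds that $1 + e^{-\ell} \cdot \frac{\frac{u}{\ell} e^{\ell} - u - \frac{u}{\ell} + \ell}{1 + u} \leq 1 + e^{-1}$. -/
/-!
Clearing denominators, the claim becomes
`u (e^ℓ - 1 - ℓ) + ℓ² ≤ e⁻¹ ℓ e^ℓ (1 + u)`, so it suffices to bound both `ℓ²` and `e^ℓ - 1 - ℓ`
by `e⁻¹ ℓ e^ℓ`. Both bounds come from `t e^{-t} ≤ e⁻¹`: the first directly at `t = ℓ`, the second
after integrating it over `[0, ℓ]`, as `t e^{-t}` is the derivative of `-e^{-t} (1 + t)`.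
-/

open Real

lemma monotone_exp_neg_one_mul_add_exp_neg_mul_one_add :
    Monotone fun x : ℝ => exp (-1) * x + exp (-x) * (1 + x) := by
  refine monotone_of_hasDerivAt_nonneg (f' := fun x => exp (-1) - x * exp (-x)) (fun x => ?_)
    (fun x => sub_nonneg.2 (mul_exp_neg_le_exp_neg_one x))
  have h : HasDerivAt (fun x : ℝ => exp (-1) * x + exp (-x) * (1 + x))
      (exp (-1) * 1 + (exp (-x) * -1 * (1 + x) + exp (-x) * 1)) x :=
    ((hasDerivAt_id' x).const_mul _).add
      ((hasDerivAt_neg' x).exp.mul ((hasDerivAt_id' x).const_add 1))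
  exact h.congr_deriv (by ring)

lemma exp_sub_one_sub_le_exp_neg_one_mul_mul_exp {x : ℝ} (hx : 0 ≤ x) :
    exp x - 1 - x ≤ exp (-1) * x * exp x := by
  have h := monotone_exp_neg_one_mul_add_exp_neg_mul_one_add hx
  simp only [mul_zero, neg_zero, exp_zero, add_zero, zero_add, mul_one] at h
  have hexp : exp (-x) * exp x = 1 := by rw [← exp_add, neg_add_cancel, exp_zero]
  nlinarith [exp_pos x]

lemma sq_le_exp_neg_one_mul_mul_exp {x : ℝ} (hx : 0 ≤ x) : x ^ 2 ≤ exp (-1) * x * exp x := by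
  have h := mul_le_mul_of_nonneg_right (mul_exp_neg_le_exp_neg_one x) (mul_nonneg hx (exp_pos x).le)
  have hexp : exp (-x) * exp x = 1 := by rw [← exp_add, neg_add_cancel, exp_zero]
  calc x ^ 2 = x * exp (-x) * (x * exp x) := by linear_combination -x ^ 2 * hexp
    _ ≤ exp (-1) * x * exp x := by linarith

theorem stmt_15 (ℓ u : ℝ) (hℓ : 0 < ℓ) (hu : 0 ≤ u) :
    1 + Real.exp (-ℓ) * ((u / ℓ) * Real.exp ℓ - u - u / ℓ + ℓ) / (1 + u)
      ≤ 1 + Real.exp (-1) := by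
  have hnum : (u / ℓ) * exp ℓ - u - u / ℓ + ℓ = (u * (exp ℓ - 1 - ℓ) + ℓ ^ 2) / ℓ := by
    field_simp
    ring
  have hbound : u * (exp ℓ - 1 - ℓ) + ℓ ^ 2 ≤ exp (-1) * ℓ * exp ℓ * (1 + u) := by
    nlinarith [mul_le_mul_of_nonneg_left (exp_sub_one_sub_le_exp_neg_one_mul_mul_exp hℓ.le) hu,
      sq_le_exp_neg_one_mul_mul_exp hℓ.le]
  rw [add_le_add_iff_left, hnum, exp_neg, div_le_iff₀ (by linarith), ← div_eq_inv_mul,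
    div_div, div_le_iff₀ (by positivity)]
  linarith
end

section
/- Let $\varrho \in [0, 1]$ and define $g_\infty(t) := \max(1 + \varrho t, \, \varrho + t)$ for $t \geq 0$. Then for all $t \in (0, 1]$, it holds that $\left(2 - \frac{1}{t}\right) g_\infty(t) + \left(\frac{1}{t} - 1\right) g_\infty(2t) \leq 4 - 2\sqrt{2} + 2\varrho(\sqrt{2} - 1)$, with equality at $t = \frac{1}{\sqrt{2}}$. -/
/-!
On `[0, 1]` the function `g t = max (1 + ρ t) (ρ + t)` is the affine map `1 + ρ t`, and beyond `1`
it is `ρ + t`. The weights `2 - 1/t` and `1/t - 1` sum to `1` and average `t` and `2t` to `1`, so for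
`t ≤ 1/2` the combination equals `g 1 = 1 + ρ`. For `t ≥ 1/2` it equals
`4 - 2ρ - (1 - ρ)(2t + 1/t)`, and `2t + 1/t ≥ 2√2` by AM-GM, with equality at `t = 1/√2`.
-/

lemma max_one_add_mul_eq_left {ρ t : ℝ} (hρ : ρ ≤ 1) (ht : t ≤ 1) :
    max (1 + ρ * t) (ρ + t) = 1 + ρ * t :=
  max_eq_left (by nlinarith [mul_nonneg (sub_nonneg.2 hρ) (sub_nonneg.2 ht)])

lemma max_one_add_mul_eq_right {ρ t : ℝ} (hρ : ρ ≤ 1) (ht : 1 ≤ t) :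
    max (1 + ρ * t) (ρ + t) = ρ + t :=
  max_eq_right (by nlinarith [mul_nonneg (sub_nonneg.2 hρ) (sub_nonneg.2 ht)])

lemma two_sub_inv_mul_add_inv_sub_one_mul_affine (a b : ℝ) {t : ℝ} (ht : t ≠ 0) :
    (2 - 1 / t) * (a + b * t) + (1 / t - 1) * (a + b * (2 * t)) = a + b := by
  field_simp
  ring

lemma two_sub_inv_mul_add_inv_sub_one_mul_kink (ρ : ℝ) {t : ℝ} (ht : t ≠ 0) :
    (2 - 1 / t) * (1 + ρ * t) + (1 / t - 1) * (ρ + 2 * t)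
      = 4 - 2 * ρ - (1 - ρ) * (2 * t + 1 / t) := by
  field_simp
  ring

lemma two_mul_sqrt_two_le_two_mul_add_inv {t : ℝ} (ht : 0 < t) :
    2 * √2 ≤ 2 * t + 1 / t := by
  have hsq : 2 * t + 1 / t - 2 * √2 = (√2 * t - 1) ^ 2 / t := by
    field_simp
    rw [sub_sq, mul_pow, Real.sq_sqrt zero_le_two]
    ring
  have : 0 ≤ 2 * t + 1 / t - 2 * √2 := hsq ▸ by positivity
  linarith

lemma two_mul_add_inv_at_inv_sqrt_two : 2 * (1 / √2) + 1 / (1 / √2) = 2 * √2 := by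
  have hs : √2 ≠ 0 := by positivity
  field_simp
  rw [Real.sq_sqrt zero_le_two]
  norm_num

theorem stmt_19 (ρ : ℝ) (hρ : ρ ∈ Set.Icc (0:ℝ) 1) :
    (∀ t ∈ Set.Ioc (0:ℝ) 1,
      (2 - 1 / t) * max (1 + ρ * t) (ρ + t)
          + (1 / t - 1) * max (1 + ρ * (2 * t)) (ρ + 2 * t)
        ≤ 4 - 2 * Real.sqrt 2 + 2 * ρ * (Real.sqrt 2 - 1)) ∧
    (2 - 1 / (1 / Real.sqrt 2)) * max (1 + ρ * (1 / Real.sqrt 2)) (ρ + 1 / Real.sqrt 2)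
        + (1 / (1 / Real.sqrt 2) - 1)
          * max (1 + ρ * (2 * (1 / Real.sqrt 2))) (ρ + 2 * (1 / Real.sqrt 2))
      = 4 - 2 * Real.sqrt 2 + 2 * ρ * (Real.sqrt 2 - 1) := by
  have hρ1 : 0 ≤ 1 - ρ := sub_nonneg.2 hρ.2
  have h_one_lt_sqrt : 1 < √2 := by simpa using Real.sqrt_lt_sqrt zero_le_one one_lt_two
  constructor
  · rintro t ⟨ht0, ht1⟩
    rw [max_one_add_mul_eq_left hρ.2 ht1]
    rcases le_or_gt (2 * t) 1 with h2t | h2t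
    · rw [max_one_add_mul_eq_left hρ.2 h2t,
        two_sub_inv_mul_add_inv_sub_one_mul_affine 1 ρ ht0.ne']
      -- `2√2 ≤ 3` is AM-GM at `t = 1/2`
      have h := two_mul_sqrt_two_le_two_mul_add_inv one_half_pos
      nlinarith [mul_le_mul_of_nonneg_left h hρ1]
    · rw [max_one_add_mul_eq_right hρ.2 h2t.le,
        two_sub_inv_mul_add_inv_sub_one_mul_kink ρ ht0.ne']
      nlinarith [mul_le_mul_of_nonneg_left (two_mul_sqrt_two_le_two_mul_add_inv ht0) hρ1]
  · have hinv : 1 / √2 ≤ 1 := (div_le_one (by positivity)).2 h_one_lt_sqrt.le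
    have htwo : 1 ≤ 2 * (1 / √2) := by
      rw [mul_one_div, le_div_iff₀ (by positivity)]
      nlinarith [Real.sq_sqrt zero_le_two]
    rw [max_one_add_mul_eq_left hρ.2 hinv, max_one_add_mul_eq_right hρ.2 htwo,
      two_sub_inv_mul_add_inv_sub_one_mul_kink ρ (by positivity), two_mul_add_inv_at_inv_sqrt_two]
    ring
end
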